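/- arXiv:2003.12225 — 5 statements merged into one kernel-verified Lean document; each statement's English description precedes it below -/
import Mathlib

section
/- Let X be a random variable uniformly distributed on a finite set 𝒳, and let Z be a random variable taking values in a finite set 𝒵 (with arbitrary joint distribution consistent with X uniform). Then for every s ∈ (0,1], the conditional Rényi entropy H_{1+s}(X|Z) := (-1/s) · log ( Σ_{z} P_Z(z) Σ_{x} P_{X|Z}(x|z)^{1+s} ) satisfies H_{1+s}(X|Z) ≥ log(|𝒳| / |𝒵|). -/
/-!
Write `q z = ∑ x, p x z`. The quantity inside the logarithm equals
`∑_{x,z} p x z · (p x z / q z)^s`, the `p`-average of `(p x z / q z)^s`. Since `t ↦ t^s` is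
concave for `s ≤ 1`, Jensen bounds it by `(∑_{x,z} p x z · p x z / q z)^s`. As `X` is uniform,
every `p x z ≤ 1/|𝒳|`, so each `z` contributes at most `1/|𝒳|` to the inner sum, which is
therefore at most `|𝒵|/|𝒳|`.
-/

open Finset

lemma mul_div_rpow_one_add {p q s : ℝ} (hpq : 0 ≤ p / q) (hs : s ≠ 0) (hs' : 1 + s ≠ 0) :
    q * (p / q) ^ (1 + s) = p * (p / q) ^ s := by
  rw [Real.rpow_add' hpq hs', Real.rpow_one, ← mul_assoc]
  rcases eq_or_ne q 0 with rfl | hq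
  · simp [Real.zero_rpow hs]
  · rw [mul_div_cancel₀ p hq]

lemma sum_mul_rpow_le_rpow_sum_mul {ι : Type*} (t : Finset ι) {w f : ι → ℝ} {s : ℝ}
    (hw : ∀ i ∈ t, 0 ≤ w i) (hw₁ : ∑ i ∈ t, w i = 1) (hf : ∀ i ∈ t, 0 ≤ f i)
    (hs₀ : 0 ≤ s) (hs₁ : s ≤ 1) :
    ∑ i ∈ t, w i * f i ^ s ≤ (∑ i ∈ t, w i * f i) ^ s :=
  (Real.concaveOn_rpow hs₀ hs₁).le_map_sum hw hw₁ hf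

lemma sum_mul_div_sum_le {ι : Type*} (t : Finset ι) {p : ι → ℝ} {c : ℝ}
    (hp : ∀ i ∈ t, 0 ≤ p i) (hpc : ∀ i ∈ t, p i ≤ c) (hc : 0 ≤ c) :
    ∑ i ∈ t, p i * (p i / ∑ j ∈ t, p j) ≤ c := by
  have hq : 0 ≤ ∑ j ∈ t, p j := sum_nonneg hp
  calc ∑ i ∈ t, p i * (p i / ∑ j ∈ t, p j)
      ≤ ∑ i ∈ t, c * (p i / ∑ j ∈ t, p j) :=
        sum_le_sum fun i hi => mul_le_mul_of_nonneg_right (hpc i hi) (div_nonneg (hp i hi) hq)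
    _ = c * ((∑ j ∈ t, p j) / ∑ j ∈ t, p j) := by rw [← mul_sum, ← sum_div]
    _ ≤ c := mul_le_of_le_one_right hc (div_self_le_one _)

lemma log_inv_le_neg_one_div_mul_log {a b s : ℝ} (hs : 0 < s) (ha : 0 < a) (hb : 0 < b)
    (hab : a ≤ b ^ s) : Real.log b⁻¹ ≤ -1 / s * Real.log a := by
  have hlog : Real.log a ≤ s * Real.log b :=
    (Real.log_le_log ha hab).trans_eq (Real.log_rpow hb s)
  rw [Real.log_inv, neg_div, neg_mul, neg_le_neg_iff, div_mul_eq_mul_div, one_mul,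
    div_le_iff₀ hs]
  linarith

section JointDistribution

variable {α β : Type*} [Fintype α] {p : α → β → ℝ}

lemma exists_pos_of_sum_sum_eq_one [Fintype β] (hsum : ∑ x, ∑ z, p x z = 1) :
    ∃ x z, 0 < p x z := by
  obtain ⟨x, -, hx⟩ := exists_lt_of_sum_lt (f := 0) (g := fun x => ∑ z, p x z) (s := univ)
    (by simp [hsum])
  obtain ⟨z, -, hz⟩ := exists_lt_of_sum_lt (f := 0) (g := p x) (s := univ) (by simpa using hx)
  exact ⟨x, z, hz⟩

lemma div_sum_nonneg (hp : ∀ x z, 0 ≤ p x z) (x : α) (z : β) : 0 ≤ p x z / ∑ x', p x' z :=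
  div_nonneg (hp x z) (sum_nonneg fun x' _ => hp x' z)

lemma sum_mul_sum_div_rpow_one_add_eq [Fintype β] (hp : ∀ x z, 0 ≤ p x z)
    {s : ℝ} (hs : 0 < s) :
    ∑ z, (∑ x, p x z) * ∑ x, (p x z / ∑ x', p x' z) ^ (1 + s) =
      ∑ i : α × β, p i.1 i.2 * (p i.1 i.2 / ∑ x', p x' i.2) ^ s := by
  rw [Fintype.sum_prod_type_right]
  simp only [mul_sum]
  refine sum_congr rfl fun z _ => sum_congr rfl fun x _ => ?_
  exact mul_div_rpow_one_add (div_sum_nonneg hp x z) hs.ne' (by linarith)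

lemma sum_mul_div_sum_rpow_pos [Fintype β] (hp : ∀ x z, 0 ≤ p x z)
    {x₀ : α} {z₀ : β} (hp₀ : 0 < p x₀ z₀) (s : ℝ) :
    0 < ∑ i : α × β, p i.1 i.2 * (p i.1 i.2 / ∑ x', p x' i.2) ^ s := by
  have hq₀ : 0 < ∑ x', p x' z₀ :=
    hp₀.trans_le (single_le_sum (fun x _ => hp x z₀) (mem_univ x₀))
  exact sum_pos' (fun i _ => mul_nonneg (hp _ _) (Real.rpow_nonneg (div_sum_nonneg hp _ _) s))
    ⟨(x₀, z₀), mem_univ _, mul_pos hp₀ (Real.rpow_pos_of_pos (div_pos hp₀ hq₀) s)⟩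

lemma sum_mul_div_sum_le_card_mul [Fintype β] (hp : ∀ x z, 0 ≤ p x z)
    {c : ℝ} (hpc : ∀ x z, p x z ≤ c) (hc : 0 ≤ c) :
    ∑ i : α × β, p i.1 i.2 * (p i.1 i.2 / ∑ x', p x' i.2) ≤ Fintype.card β * c := by
  rw [Fintype.sum_prod_type_right]
  calc _ ≤ ∑ _z : β, c :=
        sum_le_sum fun z _ => sum_mul_div_sum_le univ (fun x _ => hp x z) (fun x _ => hpc x z) hc
    _ = _ := by rw [sum_const, card_univ, nsmul_eq_mul]

end JointDistribution

theorem renyi_conditional_entropy_uniform_lower_bound_general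
    {𝒳 𝒵 : Type} [Fintype 𝒳] [Fintype 𝒵]
    (p : 𝒳 → 𝒵 → ℝ)
    (hp : ∀ x z, 0 ≤ p x z)
    (hsum : ∑ x : 𝒳, ∑ z : 𝒵, p x z = 1)
    (huniform : ∀ x : 𝒳, ∑ z : 𝒵, p x z = 1 / (Fintype.card 𝒳 : ℝ))
    (s : ℝ) (hs0 : 0 < s) (hs1 : s ≤ 1) :
    Real.log ((Fintype.card 𝒳 : ℝ) / (Fintype.card 𝒵 : ℝ)) ≤
      (-1 / s) *
        Real.log (∑ z : 𝒵, (∑ x : 𝒳, p x z) *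
          ∑ x : 𝒳, (p x z / ∑ x' : 𝒳, p x' z) ^ ((1 : ℝ) + s)) := by
  obtain ⟨x₀, z₀, hp₀⟩ := exists_pos_of_sum_sum_eq_one hsum
  have hM : (0 : ℝ) < Fintype.card 𝒳 := Nat.cast_pos.2 (Fintype.card_pos_iff.2 ⟨x₀⟩)
  have hN : (0 : ℝ) < Fintype.card 𝒵 := Nat.cast_pos.2 (Fintype.card_pos_iff.2 ⟨z₀⟩)
  have hpM : ∀ x z, p x z ≤ 1 / (Fintype.card 𝒳 : ℝ) := fun x z =>
    huniform x ▸ single_le_sum (fun z _ => hp x z) (mem_univ z)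
  have hcollision := sum_mul_div_sum_le_card_mul hp hpM (by positivity)
  rw [sum_mul_sum_div_rpow_one_add_eq hp hs0, ← inv_div]
  refine log_inv_le_neg_one_div_mul_log hs0 (sum_mul_div_sum_rpow_pos hp hp₀ s)
    (div_pos hN hM) ?_
  calc _ ≤ (∑ i : 𝒳 × 𝒵, p i.1 i.2 * (p i.1 i.2 / ∑ x', p x' i.2)) ^ s :=
        sum_mul_rpow_le_rpow_sum_mul univ (fun i _ => hp i.1 i.2)
          (by rwa [Fintype.sum_prod_type]) (fun i _ => div_sum_nonneg hp i.1 i.2) hs0.le hs1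
    _ ≤ _ := Real.rpow_le_rpow (sum_nonneg fun i _ => mul_nonneg (hp _ _)
          (div_sum_nonneg hp _ _)) (hcollision.trans_eq (mul_one_div _ _)) hs0.le

/-- If `X` is uniform on a finite set `𝒳` and `Z` is any finite random variable,
then the conditional Rényi entropy of order `1+s` satisfies
`H_{1+s}(X|Z) ≥ log(|𝒳|/|𝒵|)`. The joint distribution is `p : 𝒳 → 𝒵 → ℝ`,
`P_Z z = ∑ x, p x z`, and `P_{X|Z}(x|z) = p x z / P_Z z`. -/
theorem renyi_conditional_entropy_uniform_lower_bound
    {𝒳 𝒵 : Type} [Fintype 𝒳] [Fintype 𝒵] [Nonempty 𝒳] [Nonempty 𝒵]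
    (p : 𝒳 → 𝒵 → ℝ)
    (hp : ∀ x z, 0 ≤ p x z)
    (hsum : ∑ x : 𝒳, ∑ z : 𝒵, p x z = 1)
    (huniform : ∀ x : 𝒳, ∑ z : 𝒵, p x z = 1 / (Fintype.card 𝒳 : ℝ))
    (s : ℝ) (hs0 : 0 < s) (hs1 : s ≤ 1) :
    Real.log ((Fintype.card 𝒳 : ℝ) / (Fintype.card 𝒵 : ℝ)) ≤
      (-1 / s) *
        Real.log (∑ z : 𝒵, (∑ x : 𝒳, p x z) *
          ∑ x : 𝒳, (p x z / ∑ x' : 𝒳, p x' z) ^ ((1 : ℝ) + s)) :=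
  renyi_conditional_entropy_uniform_lower_bound_general p hp hsum huniform s hs0 hs1
end

section
/- Let q be a prime power and n, m positive integers. Choose V_1, …, V_m independently and uniformly from F_q. Define the n×m matrix U_1 by (U_1)_{i,j} = (V_j)^i for 1 ≤ i ≤ n, 1 ≤ j ≤ m. Then for any two distinct row vectors x ≠ x' ∈ F_q^n, Pr[ x U_1 = x' U_1 ] ≤ (n/q)^m. -/
open Finset Polynomial

/-!
Both sides of `x U₁ = x' U₁` are, column by column, evaluations at `V j` of the polynomials
`∑ xᵢ Xⁱ⁺¹` and `∑ x'ᵢ Xⁱ⁺¹`. Their difference is a nonzero polynomial of degree at most `n`,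
so it has at most `n` roots, and a colliding tuple `V` must have every coordinate among them:
there are at most `n ^ m` such tuples.
-/

theorem Nat.card_subtype_forall_pi {ι α : Type*} [Fintype ι] (P : α → Prop) :
    Nat.card {V : ι → α // ∀ j, P (V j)} = Nat.card {a // P a} ^ Fintype.card ι := by
  rw [Nat.card_congr Equiv.subtypePiEquivPi, Nat.card_pi, prod_const, Finset.card_univ]

theorem Polynomial.card_isRoot_le_natDegree {R : Type*} [CommRing R] [IsDomain R] {p : R[X]}
    (hp : p ≠ 0) : Nat.card {a // p.IsRoot a} ≤ p.natDegree := by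
  classical
  calc Nat.card {a // p.IsRoot a} = p.roots.toFinset.card := by
        rw [← Nat.card_eq_finsetCard]
        exact Nat.card_congr (Equiv.subtypeEquivRight fun a => by simp [hp])
    _ ≤ Multiset.card p.roots := Multiset.toFinset_card_le _
    _ ≤ p.natDegree := card_roots' p

section VandermondePoly

variable {R : Type*} [Semiring R] {n : ℕ}

/-- Its value at `v` is the row vector `c` times the column `(v, v², …, vⁿ)` of `U₁`. -/
noncomputable def vandermondePoly (c : Fin n → R) : R[X] :=
  ∑ i : Fin n, C (c i) * X ^ ((i : ℕ) + 1)

theorem eval_vandermondePoly (c : Fin n → R) (v : R) :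
    (vandermondePoly c).eval v = ∑ i : Fin n, c i * v ^ ((i : ℕ) + 1) := by
  simp [vandermondePoly, eval_finsetSum]

theorem coeff_vandermondePoly_succ (c : Fin n → R) (i : Fin n) :
    (vandermondePoly c).coeff ((i : ℕ) + 1) = c i := by
  rw [vandermondePoly, finsetSum_coeff, sum_eq_single i]
  · simp
  · intro j _ hji
    rw [coeff_C_mul_X_pow, if_neg (by omega)]
  · simp

theorem vandermondePoly_ne_zero {c : Fin n → R} (hc : c ≠ 0) : vandermondePoly c ≠ 0 := by
  obtain ⟨i, hi⟩ := Function.ne_iff.mp hc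
  intro h
  simp [← coeff_vandermondePoly_succ c i, h] at hi

theorem natDegree_vandermondePoly_le (c : Fin n → R) : (vandermondePoly c).natDegree ≤ n :=
  natDegree_sum_le_of_forall_le _ _ fun i _ =>
    (natDegree_C_mul_le _ _).trans ((natDegree_X_pow_le _).trans i.isLt)

end VandermondePoly

theorem card_vandermonde_collisions_le {F : Type*} [Field F] {n : ℕ} (m : ℕ) {x x' : Fin n → F}
    (hxx : x ≠ x') :
    Nat.card {V : Fin m → F //
        ∀ j, ∑ i : Fin n, x i * V j ^ ((i : ℕ) + 1) = ∑ i : Fin n, x' i * V j ^ ((i : ℕ) + 1)}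
      ≤ n ^ m := by
  set p := vandermondePoly (x - x')
  have hp : p ≠ 0 := vandermondePoly_ne_zero (sub_ne_zero.mpr hxx)
  have collision_iff_isRoot (v : F) :
      ∑ i : Fin n, x i * v ^ ((i : ℕ) + 1) = ∑ i : Fin n, x' i * v ^ ((i : ℕ) + 1) ↔
        p.IsRoot v := by
    simp [p, IsRoot.def, eval_vandermondePoly, sub_mul, sub_eq_zero]
  simp_rw [collision_iff_isRoot]
  rw [Nat.card_subtype_forall_pi, Fintype.card_fin]
  exact Nat.pow_le_pow_left ((card_isRoot_le_natDegree hp).trans (natDegree_vandermondePoly_le _)) m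

theorem vandermonde_collision_probability_general
    {F : Type} [Field F] {q : ℕ}
    (n m : ℕ)
    (x x' : Fin n → F) (hxx : x ≠ x') :
    (Nat.card {V : Fin m → F //
        ∀ j : Fin m, (∑ i : Fin n, x i * (V j) ^ ((i : ℕ) + 1))
          = ∑ i : Fin n, x' i * (V j) ^ ((i : ℕ) + 1)} : ℝ) / (q : ℝ) ^ m
      ≤ ((n : ℝ) / (q : ℝ)) ^ m := by
  rw [div_pow]
  gcongr
  exact_mod_cast card_vandermonde_collisions_le m hxx

/-- Lemma (Jaggi et al.): choosing `V_1,…,V_m` i.i.d. uniform in `F_q` and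
forming the `n × m` matrix `U_1` with `(U_1)_{i,j} = (V_j)^i`, for any two
distinct row vectors `x ≠ x'` we have `Pr[x U_1 = x' U_1] ≤ (n/q)^m`.
The probability is the fraction of tuples `V ∈ F_q^m` with `x U_1 = x' U_1`. -/
theorem vandermonde_collision_probability
    {F : Type} [Field F] [Fintype F] {q : ℕ} (hq : Fintype.card F = q)
    (n m : ℕ) (hn : 0 < n) (hm : 0 < m)
    (x x' : Fin n → F) (hxx : x ≠ x') :
    (Nat.card {V : Fin m → F //
        ∀ j : Fin m, (∑ i : Fin n, x i * (V j) ^ ((i : ℕ) + 1))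
          = ∑ i : Fin n, x' i * (V j) ^ ((i : ℕ) + 1)} : ℝ) / (q : ℝ) ^ m
      ≤ ((n : ℝ) / (q : ℝ)) ^ m :=
  vandermonde_collision_probability_general n m x x' hxx
end

section
/- Let q be a prime power, n, m positive integers with m ≥ m_0, and let U_1 be the random n×m matrix with entries (U_1)_{i,j} = (V_j)^i for independent uniform V_1,…,V_m ∈ F_q. Then for any fixed matrix A ∈ F_q^{m_0 × n}, the probability that rank(A U_1) = rank(A) is at least 1 − q^{m_0} (n/q)^m. -/
/-!
If `rank (A * U₁) ≠ rank A`, some `z` has `z ᵥ* A ≠ 0` but `z ᵥ* A * U₁ = 0`. For `x = z ᵥ* A`,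
the entries of `x ᵥ* U₁` are the values at `V 1, …, V m` of the nonzero polynomial
`∑ᵢ xᵢ X^(i+1)` of degree at most `n`, so every `V j` is one of its at most `n` roots: at most
`n ^ m` bad `V` per `z`. A union bound over the `q ^ m₀` vectors `z` finishes the proof.
-/

open Finset Polynomial Matrix

namespace Matrix

theorem rank_mul_eq_left_of_vecMul_eq_zero {l m n R : Type*} [Fintype l] [Fintype m]
    [Fintype n] [Field R] (A : Matrix l m R) (U : Matrix m n R)
    (h : ∀ z, z ᵥ* (A * U) = 0 → z ᵥ* A = 0) : (A * U).rank = A.rank := by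
  have hker : LinearMap.ker (Uᵀ * Aᵀ).mulVecLin = LinearMap.ker Aᵀ.mulVecLin := by
    ext z
    simp only [LinearMap.mem_ker, mulVecLin_apply, ← transpose_mul, mulVec_transpose]
    exact ⟨h z, fun hz => by rw [← vecMul_vecMul, hz, zero_vecMul]⟩
  rw [← rank_transpose, ← rank_transpose A, transpose_mul]
  refine add_left_injective (Module.finrank R (LinearMap.ker Aᵀ.mulVecLin)) ?_
  dsimp only [rank]
  rw [← hker, LinearMap.finrank_range_add_finrank_ker, hker,
    LinearMap.finrank_range_add_finrank_ker]

end Matrix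

section PowMatrix

variable {F ι : Type*} [Field F] (n : ℕ)

def powMatrix (V : ι → F) : Matrix (Fin n) ι F := Matrix.of fun i j => V j ^ ((i : ℕ) + 1)

variable {n}

noncomputable def powPoly (x : Fin n → F) : F[X] := ∑ i, C (x i) * X ^ ((i : ℕ) + 1)

theorem eval_powPoly (x : Fin n → F) (v : F) :
    (powPoly x).eval v = ∑ i, x i * v ^ ((i : ℕ) + 1) := by
  simp [powPoly, eval_finsetSum]

theorem vecMul_powMatrix [Fintype ι] (x : Fin n → F) (V : ι → F) (j : ι) :
    (x ᵥ* powMatrix n V) j = (powPoly x).eval (V j) := by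
  simp [eval_powPoly, vecMul, dotProduct, powMatrix]

theorem natDegree_powPoly_le (x : Fin n → F) : (powPoly x).natDegree ≤ n :=
  natDegree_sum_le_of_forall_le _ _ fun i _ =>
    natDegree_C_mul_X_pow_le (x i) _ |>.trans i.isLt

theorem coeff_powPoly_succ (x : Fin n → F) (i : Fin n) :
    (powPoly x).coeff ((i : ℕ) + 1) = x i := by
  simp [powPoly, coeff_C_mul, coeff_X_pow, Fin.val_inj]

theorem powPoly_ne_zero {x : Fin n → F} (hx : x ≠ 0) : powPoly x ≠ 0 := by
  obtain ⟨i, hi⟩ := Function.ne_iff.mp hx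
  intro h
  have := coeff_powPoly_succ x i
  rw [h, coeff_zero] at this
  exact hi this.symm

theorem card_vecMul_powMatrix_eq_zero_le [Fintype F] [DecidableEq F] [Fintype ι] [DecidableEq ι]
    {x : Fin n → F} (hx : x ≠ 0) :
    #{V : ι → F | x ᵥ* powMatrix n V = 0} ≤ n ^ Fintype.card ι := by
  have hroots : #{v : F | (powPoly x).eval v = 0} ≤ n :=
    (card_le_degree_of_subset_roots fun v hv => by
      simpa [mem_roots (powPoly_ne_zero hx)] using hv).trans (natDegree_powPoly_le x)
  have hbox : ({V : ι → F | x ᵥ* powMatrix n V = 0} : Finset _) =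
      Fintype.piFinset fun _ => {v : F | (powPoly x).eval v = 0} := by
    ext V
    simp [funext_iff, vecMul_powMatrix]
  rw [hbox, Fintype.card_piFinset, prod_const, card_univ]
  exact Nat.pow_le_pow_left hroots _

theorem card_rank_mul_powMatrix_ne_le [Fintype F] [DecidableEq F] [Fintype ι] [DecidableEq ι]
    {l : Type*} [Fintype l] [DecidableEq l] (A : Matrix l (Fin n) F) :
    #{V : ι → F | (A * powMatrix n V).rank ≠ A.rank}
      ≤ Fintype.card F ^ Fintype.card l * n ^ Fintype.card ι := by
  have hcover : ({V : ι → F | (A * powMatrix n V).rank ≠ A.rank} : Finset _) ⊆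
      ({z : l → F | z ᵥ* A ≠ 0} : Finset _).biUnion
        fun z => {V : ι → F | (z ᵥ* A) ᵥ* powMatrix n V = 0} := by
    intro V hV
    obtain ⟨z, hzAU, hzA⟩ : ∃ z, z ᵥ* (A * powMatrix n V) = 0 ∧ z ᵥ* A ≠ 0 := by
      by_contra! h
      exact (mem_filter.mp hV).2 (rank_mul_eq_left_of_vecMul_eq_zero A _ h)
    simp only [mem_biUnion, mem_filter, mem_univ, true_and]
    exact ⟨z, hzA, by rwa [vecMul_vecMul]⟩
  calc _ ≤ _ := card_le_card hcover
    _ ≤ ∑ z ∈ ({z : l → F | z ᵥ* A ≠ 0} : Finset _), n ^ Fintype.card ι :=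
      card_biUnion_le.trans <| sum_le_sum fun z hz =>
        card_vecMul_powMatrix_eq_zero_le (mem_filter.mp hz).2
    _ ≤ ∑ _z : l → F, n ^ Fintype.card ι := sum_le_sum_of_subset (filter_subset _ _)
    _ = _ := by simp

theorem card_pow_le_card_rank_mul_powMatrix_eq_add [Fintype F] [DecidableEq F] [Fintype ι]
    [DecidableEq ι] {l : Type*} [Fintype l] [DecidableEq l] (A : Matrix l (Fin n) F) :
    Fintype.card F ^ Fintype.card ι ≤ #{V : ι → F | (A * powMatrix n V).rank = A.rank}
      + Fintype.card F ^ Fintype.card l * n ^ Fintype.card ι := by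
  have hsplit := card_filter_add_card_filter_not (s := univ)
    fun V : ι → F => (A * powMatrix n V).rank = A.rank
  rw [card_univ, Fintype.card_fun] at hsplit
  exact hsplit ▸ Nat.add_le_add_left (card_rank_mul_powMatrix_ne_le A) _

end PowMatrix

theorem vandermonde_rank_preservation_probability_general
    {F : Type} [Field F] [Fintype F] {q : ℕ}
    (hq : Fintype.card F = q)
    (n m m0 : ℕ)
    (A : Matrix (Fin m0) (Fin n) F) :
    (1 : ℝ) - (q : ℝ) ^ m0 * ((n : ℝ) / (q : ℝ)) ^ m
      ≤ (Nat.card {V : Fin m → F //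
          (A * (Matrix.of fun (i : Fin n) (j : Fin m) => (V j) ^ ((i : ℕ) + 1))).rank
            = A.rank} : ℝ) / (q : ℝ) ^ m := by
  classical
  subst hq
  have hcount := card_pow_le_card_rank_mul_powMatrix_eq_add (ι := Fin m) A
  rw [Fintype.card_fin, Fintype.card_fin] at hcount
  have hq : (Fintype.card F : ℝ) ≠ 0 := by exact_mod_cast Fintype.card_ne_zero
  rw [Nat.card_eq_fintype_card, Fintype.card_subtype, le_div_iff₀ (by positivity), sub_mul,
    one_mul, mul_assoc, ← mul_pow, div_mul_cancel₀ _ hq, sub_le_iff_le_add]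
  exact_mod_cast hcount

/-- For the random Vandermonde-type `n × m` matrix `U_1` with
`(U_1)_{i,j} = (V_j)^i` for i.i.d. uniform `V_1,…,V_m ∈ F_q`, and any fixed
`m_0 × n` matrix `A`, the probability that `rank(A U_1) = rank(A)` is at
least `1 − q^{m_0} (n/q)^m`. -/
theorem vandermonde_rank_preservation_probability
    {F : Type} [Field F] [Fintype F] [DecidableEq F] {q : ℕ}
    (hq : Fintype.card F = q)
    (n m m0 : ℕ) (hn : 0 < n) (hm : 0 < m) (hm0 : m0 ≤ m)
    (A : Matrix (Fin m0) (Fin n) F) :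
    (1 : ℝ) - (q : ℝ) ^ m0 * ((n : ℝ) / (q : ℝ)) ^ m
      ≤ (Nat.card {V : Fin m → F //
          (A * (Matrix.of fun (i : Fin n) (j : Fin m) => (V j) ^ ((i : ℕ) + 1))).rank
            = A.rank} : ℝ) / (q : ℝ) ^ m :=
  vandermonde_rank_preservation_probability_general hq n m m0 A
end

section
/- Let F_q be a finite field and let U_0 be chosen uniformly at random among all invertible m_3 × m_3 matrices over F_q. Fix matrices K_B ∈ F_q^{m_4 × m_3} of rank m_0 and Ĥ_B ∈ F_q^{m_4 × m_1} of rank at most m_1, with m_1 < m_0 ≤ m_3, and let P ∈ F_q^{m_3 × (m_0−m_1)} be the canonical embedding [I; 0]. Then the probability that Im(K_B U_0 P) ∩ Im(Ĥ_B) = {0} is at least ∏_{i=1}^{m_0−m_1} (1 − q^{m_1 − m_0 + i − 1}) = (1 − q^{m_1−m_0})(1 − q^{m_1−m_0+1})⋯(1 − q^{−1}). -/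
open Finset Module

/-! The event only depends on the first `k = m0 - m1` columns of `U0`, and it holds as soon as
their span meets `W = KB⁻¹(Im HB)` trivially, where `dim W ≤ m3 - m0 + m1`. Splitting
`F^m3 ≃ (F^m3 ⧸ W) × W`, the number of `k`-families that are independent modulo `W` is
`∏_{i<k} (q^m3 - q^(dim W + i))`, and every independent `k`-family extends to an invertible
matrix in the same number of ways. So the proportion of such `U0` is
`∏_{i<k} (q^m3 - q^(dim W + i)) / (q^m3 - q^i)`, and each factor is at least
`1 - q^(dim W + i - m3) ≥ 1 - q^(m1 - m0 + i)`. -/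

namespace Submodule

variable {K V : Type*} [Field K] [AddCommGroup V] [Module K V] (W : Submodule K V)

theorem exists_equiv_quotient_prod : ∃ φ : V ≃ (V ⧸ W) × W, Prod.fst ∘ φ = W.mkQ := by
  obtain ⟨C, hC⟩ := W.exists_isCompl
  let ψ : ((V ⧸ W) × W) ≃ₗ[K] V :=
    ((W.quotientEquivOfIsCompl C hC).prodCongr (LinearEquiv.refl K W)).trans
      (prodEquivOfIsCompl C W hC.symm)
  refine ⟨ψ.symm.toEquiv, funext fun v => ?_⟩
  obtain ⟨x, rfl⟩ := ψ.surjective v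
  simp [ψ]

theorem linearIndependent_mkQ_comp_iff {ι : Type*} (u : ι → V) :
    LinearIndependent K (W.mkQ ∘ u) ↔
      LinearIndependent K u ∧ Disjoint (span K (Set.range u)) W := by
  refine ⟨fun h => ⟨h.of_comp, ?_⟩, fun h => h.1.map (by rw [ker_mkQ]; exact h.2)⟩
  simpa using range_ker_disjoint h

theorem natCard_subtype_mkQ_comp {ι : Type*} [Finite ι] (P : (ι → V ⧸ W) → Prop) :
    Nat.card {u : ι → V // P (W.mkQ ∘ u)} =
      Nat.card {t // P t} * Nat.card W ^ Nat.card ι := by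
  obtain ⟨φ, hφ⟩ := W.exists_equiv_quotient_prod
  let e : {u : ι → V // P (W.mkQ ∘ u)} ≃ {p : (ι → V ⧸ W) × (ι → W) // P p.1} :=
    ((Equiv.piCongrRight fun _ => φ).trans
      (Equiv.arrowProdEquivProdArrow _ _ _)).subtypeEquiv fun u => by rw [← hφ]; rfl
  rw [Nat.card_congr (e.trans Equiv.prodSubtypeFstEquivSubtypeProd), Nat.card_prod, Nat.card_fun]

theorem card_linearIndependent_mkQ_comp [Fintype K] [Finite V] {j : ℕ}
    (hj : j + finrank K W ≤ finrank K V) :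
    Nat.card {u : Fin j → V // LinearIndependent K (W.mkQ ∘ u)} =
      ∏ i ∈ range j, (Fintype.card K ^ finrank K V - Fintype.card K ^ (finrank K W + i)) := by
  have : Finite (V ⧸ W) := Finite.of_surjective _ W.mkQ_surjective
  have hquot := W.finrank_quotient_add_finrank
  rw [W.natCard_subtype_mkQ_comp (ι := Fin j) (fun t => LinearIndependent K t),
    card_linearIndependent (by omega), Nat.card_eq_fintype_card (α := Fin j), Fintype.card_fin,
    Module.natCard_eq_pow_finrank (K := K), Nat.card_eq_fintype_card (α := K), ← hquot,
    Fin.prod_univ_eq_prod_range (fun i => _ ^ finrank K (V ⧸ W) - _ ^ i),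
    pow_eq_prod_const _ j, ← prod_mul_distrib]
  refine prod_congr rfl fun i _ => ?_
  rw [Nat.sub_mul, ← pow_add, ← pow_add, add_comm i]

theorem finrank_comap_le [FiniteDimensional K V] {V₂ : Type*} [AddCommGroup V₂] [Module K V₂]
    [FiniteDimensional K V₂] (f : V →ₗ[K] V₂) (X : Submodule K V₂) :
    finrank K (X.comap f) ≤ finrank K (LinearMap.ker f) + finrank K X := by
  have hrange : finrank K (LinearMap.range (f.domRestrict (X.comap f))) ≤ finrank K X := by
    rw [LinearMap.range_domRestrict]
    exact finrank_mono (map_comap_le f X)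
  have hker : finrank K (LinearMap.ker (f.domRestrict (X.comap f))) ≤
      finrank K (LinearMap.ker f) := by
    rw [LinearMap.ker_domRestrict, ← finrank_map_subtype_eq, map_comap_subtype]
    exact finrank_mono inf_le_right
  have := LinearMap.finrank_range_add_finrank_ker (f.domRestrict (X.comap f))
  omega

end Submodule

theorem Submodule.disjoint_map_of_disjoint_comap {R M M₂ : Type*} [Semiring R]
    [AddCommMonoid M] [Module R M] [AddCommMonoid M₂] [Module R M₂] {f : M →ₗ[R] M₂}
    {p : Submodule R M} {X : Submodule R M₂} (h : Disjoint p (X.comap f)) :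
    Disjoint (p.map f) X := by
  rw [Submodule.disjoint_def] at h ⊢
  rintro _ ⟨y, hy, rfl⟩ hX
  simp [h y hy hX]

theorem card_linearIndependent_sum_extending {K V : Type*} [Field K] [Fintype K]
    [AddCommGroup V] [Module K V] [Finite V] {k l : ℕ} (hkl : k + l ≤ finrank K V)
    (p : (Fin k → V) → Prop) (hp : ∀ t, p t → LinearIndependent K t) :
    Nat.card {s : Fin k ⊕ Fin l → V // LinearIndependent K s ∧ p (s ∘ Sum.inl)} =
      Nat.card {t // p t} *
        ∏ i ∈ range l, (Fintype.card K ^ finrank K V - Fintype.card K ^ (k + i)) := by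
  let e₁ : {s : Fin k ⊕ Fin l → V // LinearIndependent K s ∧ p (s ∘ Sum.inl)} ≃
      {x : (Fin k → V) × (Fin l → V) //
        p x.1 ∧ LinearIndependent K ((Submodule.span K (Set.range x.1)).mkQ ∘ x.2)} :=
    (Equiv.sumArrowEquivProdArrow _ _ _).subtypeEquiv fun s => by
      rw [linearIndependent_sum, Submodule.linearIndependent_mkQ_comp_iff, disjoint_comm]
      exact ⟨fun ⟨⟨_, hu, hd⟩, ht⟩ => ⟨ht, hu, hd⟩,
        fun ⟨ht, hu, hd⟩ => ⟨⟨hp _ ht, hu, hd⟩, ht⟩⟩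
  let e₂ : {x : (Fin k → V) × (Fin l → V) //
        p x.1 ∧ LinearIndependent K ((Submodule.span K (Set.range x.1)).mkQ ∘ x.2)} ≃
      Σ t : {t // p t}, {u : Fin l → V //
        LinearIndependent K ((Submodule.span K (Set.range t.1)).mkQ ∘ u)} :=
    { toFun := fun x => ⟨⟨x.1.1, x.2.1⟩, x.1.2, x.2.2⟩
      invFun := fun y => ⟨(y.1.1, y.2.1), y.1.2, y.2.2⟩
      left_inv := fun _ => rfl
      right_inv := fun _ => rfl }
  have := Fintype.ofFinite {t // p t}
  rw [Nat.card_congr (e₁.trans e₂), Nat.card_sigma, Nat.card_eq_fintype_card, ← smul_eq_mul,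
    ← card_univ, ← sum_const]
  refine sum_congr rfl fun t _ => ?_
  have hspan : finrank K (Submodule.span K (Set.range t.1)) = k := by
    rw [finrank_span_eq_card (hp _ t.2), Fintype.card_fin]
  rw [Submodule.card_linearIndependent_mkQ_comp _ (by omega), hspan]

namespace Matrix

variable {K : Type*} [Field K]

theorem finrank_comap_range_add_rank_le {l m n : Type*} [Fintype l] [Fintype m] [Fintype n]
    (A : Matrix l m K) (B : Matrix l n K) :
    finrank K ((LinearMap.range B.mulVecLin).comap A.mulVecLin) + A.rank ≤
      Fintype.card m + B.rank := by
  have := Submodule.finrank_comap_le A.mulVecLin (LinearMap.range B.mulVecLin)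
  have := A.mulVecLin.finrank_range_add_finrank_ker
  rw [finrank_fintype_fun_eq_card] at this
  rw [rank, rank]
  omega

theorem range_mulVecLin_mul_inf_eq_bot {l m n : Type*} [Fintype m] [Fintype n]
    {A : Matrix l m K} {B : Matrix m n K} {X : Submodule K (l → K)}
    (h : Disjoint (LinearMap.range B.mulVecLin) (X.comap A.mulVecLin)) :
    LinearMap.range (A * B).mulVecLin ⊓ X = ⊥ := by
  rw [mulVecLin_mul, LinearMap.range_comp, ← disjoint_iff]
  exact Submodule.disjoint_map_of_disjoint_comap h

variable [Fintype K] {n k : ℕ}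

theorem card_isUnit_disjoint_range_submatrix (hk : k ≤ n) (W : Submodule K (Fin n → K))
    (hW : k + finrank K W ≤ n) :
    Nat.card {U : Matrix (Fin n) (Fin n) K // IsUnit U ∧
        Disjoint (LinearMap.range (U.submatrix id (Fin.castLE hk)).mulVecLin) W} =
      (∏ i ∈ range k, (Fintype.card K ^ n - Fintype.card K ^ (finrank K W + i))) *
        ∏ i ∈ range (n - k), (Fintype.card K ^ n - Fintype.card K ^ (k + i)) := by
  let e : Fin k ⊕ Fin (n - k) ≃ Fin n := finSumFinEquiv.trans (finCongr (by omega))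
  have he (j : Fin k) : e (Sum.inl j) = Fin.castLE hk j := by ext; simp [e]
  let cols : Matrix (Fin n) (Fin n) K ≃ (Fin k ⊕ Fin (n - k) → Fin n → K) :=
    (transposeAddEquiv _ _ K).toEquiv.trans (e.arrowCongr (Equiv.refl _)).symm
  have hcols (U : Matrix (Fin n) (Fin n) K) : cols U ∘ Sum.inl = U.col ∘ Fin.castLE hk :=
    funext fun j => congrArg U.col (he j)
  let E := cols.subtypeEquiv (p := fun U => IsUnit U ∧
      Disjoint (LinearMap.range (U.submatrix id (Fin.castLE hk)).mulVecLin) W)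
    (q := fun s => LinearIndependent K s ∧ LinearIndependent K (W.mkQ ∘ (s ∘ Sum.inl)))
    fun U => by
      rw [hcols, W.linearIndependent_mkQ_comp_iff, range_mulVecLin,
        ← linearIndependent_cols_iff_isUnit]
      have hLI : LinearIndependent K (cols U) ↔ LinearIndependent K U.col :=
        linearIndependent_equiv' e rfl
      exact ⟨fun ⟨h, hd⟩ => ⟨hLI.2 h, h.comp _ (Fin.castLE_injective hk), hd⟩,
        fun ⟨h, _, hd⟩ => ⟨hLI.1 h, hd⟩⟩
  rw [Nat.card_congr E, card_linearIndependent_sum_extending (by simp; omega)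
      (fun t => LinearIndependent K (W.mkQ ∘ t)) fun _ h => h.of_comp,
    W.card_linearIndependent_mkQ_comp (by simpa using hW), finrank_fin_fun]

theorem card_isUnit_disjoint_range_submatrix_div_card_isUnit (hk : k ≤ n)
    (W : Submodule K (Fin n → K)) (hW : k + finrank K W ≤ n) :
    (Nat.card {U : Matrix (Fin n) (Fin n) K // IsUnit U ∧
        Disjoint (LinearMap.range (U.submatrix id (Fin.castLE hk)).mulVecLin) W} : ℝ) /
      Nat.card {U : Matrix (Fin n) (Fin n) K // IsUnit U} =
    ((∏ i ∈ range k, (Fintype.card K ^ n - Fintype.card K ^ (finrank K W + i)) : ℕ) : ℝ) /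
      ((∏ i ∈ range k, (Fintype.card K ^ n - Fintype.card K ^ i) : ℕ) : ℝ) := by
  have hall := card_isUnit_disjoint_range_submatrix hk (⊥ : Submodule K (Fin n → K)) (by simpa)
  simp only [finrank_bot, zero_add, disjoint_bot_right, and_true] at hall
  have hpos : Nat.card {U : Matrix (Fin n) (Fin n) K // IsUnit U} ≠ 0 :=
    Nat.card_ne_zero.2 ⟨⟨⟨1, isUnit_one⟩⟩, inferInstance⟩
  rw [card_isUnit_disjoint_range_submatrix hk W hW, hall, Nat.cast_mul, Nat.cast_mul,
    mul_div_mul_right _ _ (by exact_mod_cast right_ne_zero_of_mul (hall ▸ hpos))]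

theorem mul_of_val_eq_val_ite {R m : Type*} [CommSemiring R] (U : Matrix m (Fin n) R)
    (hk : k ≤ n) :
    U * of (fun (i : Fin n) (j : Fin k) => if (i : ℕ) = (j : ℕ) then (1 : R) else 0) =
      U.submatrix id (Fin.castLE hk) := by
  have hval (x : Fin n) (j : Fin k) : (x : ℕ) = j ↔ x = Fin.castLE hk j := by
    rw [Fin.ext_iff, Fin.val_castLE]
  ext i j
  simp [mul_apply, hval]

end Matrix

theorem one_sub_zpow_sub_le_div {Q : ℝ} (hQ : 1 < Q) {n a i : ℕ} (ha : a ≤ n) (hi : i < n) :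
    1 - Q ^ ((a : ℤ) - n) ≤ (Q ^ n - Q ^ a) / (Q ^ n - Q ^ i) := by
  have hpos : 0 < Q ^ n - Q ^ i := sub_pos.2 (pow_lt_pow_right₀ hQ hi)
  calc 1 - Q ^ ((a : ℤ) - n) = (Q ^ n - Q ^ a) / Q ^ n := by
        rw [zpow_sub₀ (by positivity), zpow_natCast, zpow_natCast]
        field_simp
    _ ≤ (Q ^ n - Q ^ a) / (Q ^ n - Q ^ i) :=
        div_le_div_of_nonneg_left (sub_nonneg.2 (pow_le_pow_right₀ hQ.le ha)) hpos
          (sub_le_self _ (by positivity))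

theorem prod_one_sub_zpow_le_div_prod {q n w k : ℕ} (hq : 1 < q) {d : ℤ}
    (hwd : (w : ℤ) - n ≤ d) (hd : ∀ i < k, d + i < 0) :
    ∏ i ∈ range k, (1 - (q : ℝ) ^ (d + i)) ≤
      ((∏ i ∈ range k, (q ^ n - q ^ (w + i)) : ℕ) : ℝ) /
        ((∏ i ∈ range k, (q ^ n - q ^ i) : ℕ) : ℝ) := by
  have hQ : (1 : ℝ) < q := by exact_mod_cast hq
  rw [Nat.cast_prod, Nat.cast_prod, ← prod_div_distrib]
  refine prod_le_prod (fun i hi => ?_) (fun i hi => ?_)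
  · exact sub_nonneg.2 (zpow_le_one_of_nonpos₀ hQ.le (hd i (mem_range.1 hi)).le)
  · have hneg := hd i (mem_range.1 hi)
    have hwi : w + i < n := by omega
    push_cast [Nat.cast_sub (pow_le_pow_right₀ hq.le hwi.le),
      Nat.cast_sub (pow_le_pow_right₀ hq.le (by omega : i ≤ n))]
    calc 1 - (q : ℝ) ^ (d + i) ≤ 1 - (q : ℝ) ^ (((w + i : ℕ) : ℤ) - n) :=
          sub_le_sub_left (zpow_le_zpow_right₀ hQ.le (by push_cast; omega)) 1
      _ ≤ _ := one_sub_zpow_sub_le_div hQ hwi.le (by omega)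

theorem random_invertible_image_trivial_intersection_general
    {F : Type} [Field F] [Fintype F] {q : ℕ}
    (hq : Fintype.card F = q)
    (m0 m1 m3 m4 : ℕ)
    (KB : Matrix (Fin m4) (Fin m3) F) (hKB : KB.rank = m0)
    (HB : Matrix (Fin m4) (Fin m1) F) :
    ∏ i ∈ Finset.range (m0 - m1), (1 - (q : ℝ) ^ ((m1 : ℤ) - (m0 : ℤ) + (i : ℤ)))
      ≤ (Nat.card {U0 : Matrix (Fin m3) (Fin m3) F // IsUnit U0 ∧
            LinearMap.range
              (Matrix.mulVecLin (KB * U0 *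
                Matrix.of (fun (i : Fin m3) (j : Fin (m0 - m1)) =>
                  if (i : ℕ) = (j : ℕ) then (1 : F) else 0)))
              ⊓ LinearMap.range (Matrix.mulVecLin HB) = ⊥} : ℝ)
        / (Nat.card {U0 : Matrix (Fin m3) (Fin m3) F // IsUnit U0} : ℝ) := by
  subst hq
  have hW := KB.finrank_comap_range_add_rank_le HB
  rw [hKB, Fintype.card_fin] at hW
  have hHB := HB.rank_le_width
  set W := (LinearMap.range HB.mulVecLin).comap KB.mulVecLin
  have hW3 : finrank F W ≤ m3 := W.finrank_le.trans_eq (finrank_fin_fun F)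
  have hk : m0 - m1 ≤ m3 := by omega
  calc _ ≤ _ := prod_one_sub_zpow_le_div_prod Fintype.one_lt_card (w := finrank F W) (n := m3)
        (d := (m1 : ℤ) - m0) (by omega) fun i hi => by omega
    _ = _ := (Matrix.card_isUnit_disjoint_range_submatrix_div_card_isUnit hk W (by omega)).symm
    _ ≤ _ := by
      gcongr
      refine Nat.card_le_card_of_injective _
        (Subtype.impEmbedding _ _ fun U hU => ⟨hU.1, ?_⟩).injective
      rw [Matrix.mul_assoc, Matrix.mul_of_val_eq_val_ite U hk]
      exact Matrix.range_mulVecLin_mul_inf_eq_bot hU.2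

/-- For a uniformly random invertible matrix `U_0 ∈ GL(m_3, F_q)`, fixed
`K_B` of rank `m_0` and `Ĥ_B` of rank at most `m_1` with `m_1 < m_0 ≤ m_3`,
and the canonical embedding `P = [I;0]`, the probability that
`Im(K_B U_0 P) ∩ Im(Ĥ_B) = {0}` is at least
`∏_{i=1}^{m_0−m_1} (1 − q^{m_1−m_0+i−1})`. -/
theorem random_invertible_image_trivial_intersection
    {F : Type} [Field F] [Fintype F] [DecidableEq F] {q : ℕ}
    (hq : Fintype.card F = q)
    (m0 m1 m3 m4 : ℕ) (h01 : m1 < m0) (h03 : m0 ≤ m3)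
    (KB : Matrix (Fin m4) (Fin m3) F) (hKB : KB.rank = m0)
    (HB : Matrix (Fin m4) (Fin m1) F) (hHB : HB.rank ≤ m1) :
    ∏ i ∈ Finset.range (m0 - m1), (1 - (q : ℝ) ^ ((m1 : ℤ) - (m0 : ℤ) + (i : ℤ)))
      ≤ (Nat.card {U0 : Matrix (Fin m3) (Fin m3) F // IsUnit U0 ∧
            LinearMap.range
              (Matrix.mulVecLin (KB * U0 *
                Matrix.of (fun (i : Fin m3) (j : Fin (m0 - m1)) =>
                  if (i : ℕ) = (j : ℕ) then (1 : F) else 0)))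
              ⊓ LinearMap.range (Matrix.mulVecLin HB) = ⊥} : ℝ)
        / (Nat.card {U0 : Matrix (Fin m3) (Fin m3) F // IsUnit U0} : ℝ) :=
  random_invertible_image_trivial_intersection_general hq m0 m1 m3 m4 KB hKB HB
end

section
/- Let M be a random message uniformly distributed on F_q^{k} and let Y be any random variable such that Y takes values determined by an F_q-linear function of (M, L) for an independent uniform scramble L (linear network with linear code). Then the mutual information I(M; Y) is an integer multiple of log q. Consequently, if I(M; Y) < log q, then I(M; Y) = 0, i.e., M and Y are independent. -/
/-!
Under the uniform law on a finite vector space `E` over `𝔽_q`, the fibres of linear maps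
`φ`, `ψ` and `(φ, ψ)` are cosets of `ker φ`, `ker ψ` and `ker φ ⊓ ker ψ`. Hence the density
ratio `P(φ, ψ) / (P(φ) P(ψ))` takes the single value `|E| |ker φ ⊓ ker ψ| / (|ker φ| |ker ψ|)`
on the whole support, and by `dim (P ⊔ Q) + dim (P ⊓ Q) = dim P + dim Q` this value is
`q ^ d` with `d = dim (E ⧸ (ker φ ⊔ ker ψ))`. So `I(φ; ψ) = d log q`, and `d log q < log q`
forces `d = 0`.
-/

open Finset

/-- Shannon mutual information `I(f(Ω); g(Ω))` for a probability mass function `p`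
on a finite sample space `Ω`, computed from the induced joint distribution. -/
noncomputable def mutualInfo {Ω A B : Type*} [Fintype Ω] [Fintype A] [Fintype B]
    [DecidableEq A] [DecidableEq B]
    (p : Ω → ℝ) (f : Ω → A) (g : Ω → B) : ℝ :=
  ∑ a : A, ∑ b : B,
    (∑ ω ∈ Finset.univ.filter (fun ω => f ω = a ∧ g ω = b), p ω) *
      Real.log ((∑ ω ∈ Finset.univ.filter (fun ω => f ω = a ∧ g ω = b), p ω) /
        ((∑ ω ∈ Finset.univ.filter (fun ω => f ω = a), p ω) *
         (∑ ω ∈ Finset.univ.filter (fun ω => g ω = b), p ω)))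

open Real

theorem mutualInfo_eq_sum_log {Ω A B : Type*} [Fintype Ω] [Fintype A] [Fintype B]
    [DecidableEq A] [DecidableEq B] (p : Ω → ℝ) (f : Ω → A) (g : Ω → B) :
    mutualInfo p f g = ∑ ω, p ω * log ((∑ ω' with f ω' = f ω ∧ g ω' = g ω, p ω') /
        ((∑ ω' with f ω' = f ω, p ω') * ∑ ω' with g ω' = g ω, p ω')) := by
  rw [mutualInfo, ← Fintype.sum_prod_type', ← sum_fiberwise univ (fun ω => (f ω, g ω))]
  refine Fintype.sum_congr _ _ fun ab => ?_
  rw [sum_mul]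
  refine sum_congr (by ext; simp [Prod.ext_iff]) fun ω hω => ?_
  obtain rfl : (f ω, g ω) = ab := (mem_filter.mp hω).2
  rfl

theorem mutualInfo_uniform_eq_log {Ω A B : Type*} [Fintype Ω] [Nonempty Ω] [Fintype A]
    [Fintype B] [DecidableEq A] [DecidableEq B] (f : Ω → A) (g : Ω → B) (c : ℕ)
    (hc : ∀ ω, Fintype.card Ω * #{ω' | f ω' = f ω ∧ g ω' = g ω} =
      c * (#{ω' | f ω' = f ω} * #{ω' | g ω' = g ω})) :
    mutualInfo (fun _ => 1 / (Fintype.card Ω : ℝ)) f g = log c := by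
  set N := (Fintype.card Ω : ℝ) with hN_def
  have hN : N ≠ 0 := by positivity
  have hratio : ∀ ω, (#{ω' | f ω' = f ω ∧ g ω' = g ω} / N) /
      (#{ω' | f ω' = f ω} / N * (#{ω' | g ω' = g ω} / N)) = c := by
    intro ω
    have hf : (#{ω' | f ω' = f ω} : ℝ) ≠ 0 := by
      exact_mod_cast (card_pos.mpr ⟨ω, by simp⟩).ne'
    have hg : (#{ω' | g ω' = g ω} : ℝ) ≠ 0 := by
      exact_mod_cast (card_pos.mpr ⟨ω, by simp⟩).ne'
    have hcω : N * #{ω' | f ω' = f ω ∧ g ω' = g ω} =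
        c * (#{ω' | f ω' = f ω} * #{ω' | g ω' = g ω}) := by rw [hN_def]; exact_mod_cast hc ω
    field_simp
    linear_combination hcω
  simp only [mutualInfo_eq_sum_log, sum_const, nsmul_eq_mul, mul_one_div, hratio]
  rw [card_univ, ← hN_def, ← mul_assoc, mul_one_div_cancel hN, one_mul]

theorem LinearMap.card_filter_apply_eq {R E V : Type*} [Ring R] [AddCommGroup E] [Module R E]
    [AddCommGroup V] [Module R V] [Fintype E] [DecidableEq V] (φ : E →ₗ[R] V) (x₀ : E) :
    #{x | φ x = φ x₀} = Nat.card (LinearMap.ker φ) := by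
  rw [← Fintype.card_subtype, ← Nat.card_eq_fintype_card]
  exact Nat.card_congr (φ.toAddMonoidHom.fiberEquivKer x₀)

theorem Submodule.natCard_mul_natCard_inf {K E : Type*} [Field K] [AddCommGroup E] [Module K E]
    [Finite E] (P Q : Submodule K E) :
    Nat.card E * Nat.card ↥(P ⊓ Q) =
      Nat.card K ^ Module.finrank K (E ⧸ (P ⊔ Q)) * (Nat.card P * Nat.card Q) := by
  rw [Module.natCard_eq_pow_finrank (K := K) (V := E),
    Module.natCard_eq_pow_finrank (K := K) (V := ↥(P ⊓ Q)),
    Module.natCard_eq_pow_finrank (K := K) (V := P),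
    Module.natCard_eq_pow_finrank (K := K) (V := Q), ← pow_add, ← pow_add, ← pow_add]
  have hsup := Submodule.finrank_sup_add_finrank_inf_eq P Q
  have hquot := Submodule.finrank_quotient_add_finrank (P ⊔ Q)
  congr 1
  omega

theorem mutualInfo_uniform_linearMap {K E V W : Type*} [Field K] [AddCommGroup E] [Module K E]
    [AddCommGroup V] [Module K V] [AddCommGroup W] [Module K W] [Fintype E] [Fintype V]
    [Fintype W] [DecidableEq V] [DecidableEq W] (φ : E →ₗ[K] V) (ψ : E →ₗ[K] W) :
    mutualInfo (fun _ => 1 / (Fintype.card E : ℝ)) φ ψ =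
      Module.finrank K (E ⧸ (LinearMap.ker φ ⊔ LinearMap.ker ψ)) * log (Nat.card K) := by
  rw [← log_pow, ← Nat.cast_pow]
  refine mutualInfo_uniform_eq_log φ ψ _ fun x => ?_
  have hjoint : #{y | φ y = φ x ∧ ψ y = ψ x} = #{y | φ.prod ψ y = φ.prod ψ x} := by
    simp only [LinearMap.prod_apply, Function.prod, Prod.mk.injEq]
  rw [hjoint, LinearMap.card_filter_apply_eq, LinearMap.card_filter_apply_eq,
    LinearMap.card_filter_apply_eq, LinearMap.ker_prod, ← Nat.card_eq_fintype_card]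
  exact Submodule.natCard_mul_natCard_inf _ _

/-- For a uniform message `M ∈ F_q^k`, an independent uniform scramble
`L ∈ F_q^ℓ`, and a linear observation `Y = A·(M,L)ᵀ`, the mutual information
`I(M; Y)` is an integer multiple of `log q`; consequently, if
`I(M; Y) < log q` then `I(M; Y) = 0`. -/
theorem linear_leak_is_multiple_of_log_q
    {F : Type} [Field F] [Fintype F] [DecidableEq F] {q : ℕ}
    (hq : Fintype.card F = q)
    (k ℓ mo : ℕ)
    (A : Matrix (Fin mo) (Fin k ⊕ Fin ℓ) F) :
    (∃ d : ℕ,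
      mutualInfo
        (fun _ : (Fin k → F) × (Fin ℓ → F) =>
          (1 : ℝ) / (Fintype.card ((Fin k → F) × (Fin ℓ → F)) : ℝ))
        Prod.fst (fun ω => A.mulVec (Sum.elim ω.1 ω.2))
      = (d : ℝ) * Real.log q) ∧
    (mutualInfo
        (fun _ : (Fin k → F) × (Fin ℓ → F) =>
          (1 : ℝ) / (Fintype.card ((Fin k → F) × (Fin ℓ → F)) : ℝ))
        Prod.fst (fun ω => A.mulVec (Sum.elim ω.1 ω.2)) < Real.log q →
      mutualInfo
        (fun _ : (Fin k → F) × (Fin ℓ → F) =>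
          (1 : ℝ) / (Fintype.card ((Fin k → F) × (Fin ℓ → F)) : ℝ))
        Prod.fst (fun ω => A.mulVec (Sum.elim ω.1 ω.2)) = 0) := by
  let Ψ :=
    A.mulVecLin ∘ₗ (LinearEquiv.sumArrowLequivProdArrow (Fin k) (Fin ℓ) F F).symm.toLinearMap
  have hΨ : ⇑Ψ = fun ω => A.mulVec (Sum.elim ω.1 ω.2) := rfl
  have hI := mutualInfo_uniform_linearMap (LinearMap.fst F (Fin k → F) (Fin ℓ → F)) Ψ
  rw [LinearMap.coe_fst, hΨ, Nat.card_eq_fintype_card, hq] at hI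
  refine ⟨⟨_, hI⟩, fun hlt => ?_⟩
  have hlog : 0 < log q := log_pos (by exact_mod_cast hq ▸ Fintype.one_lt_card)
  rw [hI] at hlt ⊢
  have hd : _ = 0 := Nat.cast_lt_one.mp (lt_of_mul_lt_mul_right (by rwa [one_mul]) hlog.le)
  rw [hd, Nat.cast_zero, zero_mul]
end
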